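/- Fix a triangle-free graph G, a 7-assignment L for G, and L-colorings α and β of G. Suppose G has a vertex v of degree 5 with three neighbors w1, w2, w3 each of degree 3, and let G'' := G − {v, w1, w2, w3}. If G'' has an L-recoloring sequence transforming the restriction of α to G'' into the restriction of β to G'' that recolors each vertex at most 30 times, then G has an L-recoloring sequence transforming α into β that recolors each vertex at most 30 times. -/

import Mathlib

variable {V : Type} [Fintype V] [DecidableEq V]

/-- Apply a list of recoloring steps (vertex, new color) to a coloring, one by one. -/
def applySteps (α : V → ℕ) : List (V × ℕ) → (V → ℕ)
  | [] => α
  | q :: σ => applySteps (Function.update α q.1 q.2) σ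

/-- `f` is a proper `L`-coloring of the subgraph of `G` induced on the vertex set `s`. -/
def ProperOn (G : SimpleGraph V) (L : V → Finset ℕ) (s : Set V) (f : V → ℕ) : Prop :=
  (∀ v ∈ s, f v ∈ L v) ∧ ∀ u ∈ s, ∀ v ∈ s, G.Adj u v → f u ≠ f v

/-- `σ` is an `L`-recoloring sequence for the subgraph of `G` induced on `s`,
starting from the coloring `α`: every step recolors a vertex of `s`, and every
intermediate coloring (including the initial and final ones) is a proper
`L`-coloring of the induced subgraph. -/
def RecolSeqOn (G : SimpleGraph V) (L : V → Finset ℕ) (s : Set V) (α : V → ℕ)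
    (σ : List (V × ℕ)) : Prop :=
  (∀ q ∈ σ, q.1 ∈ s) ∧ ∀ n ≤ σ.length, ProperOn G L s (applySteps α (σ.take n))

/-- The number of times the recoloring sequence `σ` recolors the vertex `v`. -/
def recolors (σ : List (V × ℕ)) (v : V) : ℕ :=
  σ.countP (fun q => decide (q.1 = v))

set_option linter.unusedSectionVars false


theorem applySteps_nil (γ : V → ℕ) : applySteps γ [] = γ := rfl

theorem applySteps_cons (γ : V → ℕ) (q : V × ℕ) (l : List (V × ℕ)) :
    applySteps γ (q :: l) = applySteps (Function.update γ q.1 q.2) l := rfl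

theorem applySteps_append (γ : V → ℕ) (l₁ l₂ : List (V × ℕ)) :
    applySteps γ (l₁ ++ l₂) = applySteps (applySteps γ l₁) l₂ := by
  induction l₁ generalizing γ with
  | nil => rfl
  | cons q l ih => simp [applySteps, ih]

theorem applySteps_congrPt {γ δ : V → ℕ} (l : List (V × ℕ)) (u : V) (h : γ u = δ u) :
    applySteps γ l u = applySteps δ l u := by
  induction l generalizing γ δ with
  | nil => exact h
  | cons q l ih =>
    apply ih
    rcases eq_or_ne u q.1 with rfl | hne
    · simp
    · rw [Function.update_of_ne hne, Function.update_of_ne hne]; exact h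

theorem recolors_cons (q : V × ℕ) (l : List (V × ℕ)) (u : V) :
    recolors (q :: l) u = recolors l u + (if q.1 = u then 1 else 0) := by
  by_cases h : q.1 = u <;> simp [recolors, List.countP_cons, h]

theorem recolors_append (l₁ l₂ : List (V × ℕ)) (u : V) :
    recolors (l₁ ++ l₂) u = recolors l₁ u + recolors l₂ u := by
  simp [recolors, List.countP_append]

theorem properOn_mono (G : SimpleGraph V) (L : V → Finset ℕ) {s t : Set V} (hst : s ⊆ t)
    {f : V → ℕ} (h : ProperOn G L t f) : ProperOn G L s f :=
  ⟨fun u hu => h.1 u (hst hu), fun a ha b hb hab => h.2 a (hst ha) b (hst hb) hab⟩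

theorem properOn_congr (G : SimpleGraph V) (L : V → Finset ℕ) {s : Set V} {f g : V → ℕ}
    (hfg : ∀ u ∈ s, f u = g u) (h : ProperOn G L s f) : ProperOn G L s g := by
  constructor
  · intro u hu; rw [← hfg u hu]; exact h.1 u hu
  · intro a ha b hb hab; rw [← hfg a ha, ← hfg b hb]; exact h.2 a ha b hb hab

theorem properOn_update (G : SimpleGraph V) (L : V → Finset ℕ) {t : Set V} {γ : V → ℕ}
    (h : ProperOn G L t γ) {x : V} {c : ℕ} (hc : c ∈ L x)
    (hadj : ∀ u ∈ t, G.Adj x u → c ≠ γ u) :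
    ProperOn G L t (Function.update γ x c) := by
  constructor
  · intro u hu
    rcases eq_or_ne u x with rfl | hne
    · simpa using hc
    · rw [Function.update_of_ne hne]; exact h.1 u hu
  · intro a ha b hb hab
    by_cases hax : a = x <;> by_cases hbx : b = x
    · rw [hax, hbx] at hab; exact absurd hab (G.irrefl)
    · rw [hax] at hab ⊢
      rw [Function.update_self, Function.update_of_ne hbx]; exact hadj b hb hab
    · rw [hbx] at hab ⊢
      rw [Function.update_of_ne hax, Function.update_self]
      exact fun e => hadj a ha hab.symm e.symm
    · rw [Function.update_of_ne hax, Function.update_of_ne hbx]; exact h.2 a ha b hb hab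

theorem properOn_insert (G : SimpleGraph V) (L : V → Finset ℕ) {s : Set V} {f : V → ℕ} {z : V}
    (hs : ProperOn G L s f) (h1 : f z ∈ L z)
    (h2 : ∀ u ∈ s, G.Adj z u → f z ≠ f u) : ProperOn G L (insert z s) f := by
  constructor
  · intro u hu
    rcases Set.mem_insert_iff.mp hu with rfl | hu'
    · exact h1
    · exact hs.1 u hu'
  · intro a ha b hb hab
    rcases Set.mem_insert_iff.mp ha with rfl | ha' <;> rcases Set.mem_insert_iff.mp hb with rfl | hb'
    · exact absurd hab (G.irrefl)
    · exact h2 b hb' hab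
    · exact fun e => h2 a ha' hab.symm e.symm
    · exact hs.2 a ha' b hb' hab

theorem countP_mem_eq_sum (N : Finset V) (ρ : List (V × ℕ)) :
    ρ.countP (fun q => decide (q.1 ∈ N)) = ∑ u ∈ N, recolors ρ u := by
  induction ρ with
  | nil => simp [recolors]
  | cons q l ih =>
    rw [List.countP_cons]
    have hr : ∀ u ∈ N, recolors (q :: l) u = recolors l u + if q.1 = u then 1 else 0 :=
      fun u _ => recolors_cons q l u
    rw [Finset.sum_congr rfl hr, Finset.sum_add_distrib, ← ih, Finset.sum_ite_eq N q.1 (fun _ => 1)]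
    by_cases h : q.1 ∈ N <;> simp [h]

theorem exists_free_color (LZ : Finset ℕ) (hLz : 7 ≤ LZ.card) (F : Finset ℕ) (hF : F.card ≤ 6) :
    ∃ c ∈ LZ, c ∉ F := by
  have hlt : 0 < (LZ \ F).card := by
    have := Finset.le_card_sdiff F LZ
    omega
  obtain ⟨c, hc⟩ := Finset.card_pos.mp hlt
  exact ⟨c, (Finset.mem_sdiff.mp hc).1, (Finset.mem_sdiff.mp hc).2⟩

theorem insert_main (G : SimpleGraph V) (L : V → Finset ℕ) (z : V) (s : Set V)
    (hz : z ∉ s) (N : Finset V) (hN : ∀ u, u ∈ N ↔ G.Adj z u ∧ u ∈ s)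
    (hNcard : N.card ≤ 3) (hLz : 7 ≤ (L z).card)
    (ρ : List (V × ℕ)) :
    ∀ (γ : V → ℕ) (k : ℕ), k ≤ 2 →
      ProperOn G L (insert z s) γ →
      (∀ q ∈ ρ, q.1 ∈ s) →
      (∀ n ≤ ρ.length, ProperOn G L s (applySteps γ (ρ.take n))) →
      (∀ p ∈ (ρ.filter (fun q => decide (q.1 ∈ N))).take k, p.2 ≠ γ z) →
      ∃ (τ : List (V × ℕ)) (M : ℕ),
        (∀ q ∈ τ, q.1 ∈ insert z s) ∧
        (∀ n ≤ τ.length, ProperOn G L (insert z s) (applySteps γ (τ.take n))) ∧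
        (∀ u ∈ s, applySteps γ τ u = applySteps γ ρ u) ∧
        (∀ u, u ≠ z → recolors τ u = recolors ρ u) ∧
        recolors τ z ≤ M ∧
        3 * M + k ≤ ρ.countP (fun q => decide (q.1 ∈ N)) + 2 := by
  induction ρ with
  | nil =>
    intro γ k hk h0 _ _ _
    refine ⟨[], 0, by simp, ?_, by simp, by simp, le_refl _, by simpa using hk⟩
    intro n hn
    have : n = 0 := Nat.le_zero.mp hn
    subst this
    simpa [applySteps] using h0
  | cons q ρ' IH =>
    intro γ k hk h0 h2 h3 h4
    have hq1s : q.1 ∈ s := h2 q (List.mem_cons_self)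
    have hq1z : q.1 ≠ z := fun h => hz (h ▸ hq1s)
    have hPs' : ProperOn G L s (Function.update γ q.1 q.2) := by
      have := h3 1 (by simp)
      simpa [applySteps] using this
    have hcount : (q :: ρ').countP (fun p => decide (p.1 ∈ N)) =
        ρ'.countP (fun p => decide (p.1 ∈ N)) + (if q.1 ∈ N then 1 else 0) := by
      by_cases h : q.1 ∈ N <;> simp [List.countP_cons, h]
    -- generic "no move at z" branch
    have NOMOVE : ∀ k' : ℕ, k' ≤ 2 →
        (∀ p ∈ (ρ'.filter (fun q => decide (q.1 ∈ N))).take k', p.2 ≠ γ z) →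
        (q.1 ∈ N → q.2 ≠ γ z) →
        k ≤ k' + (if q.1 ∈ N then 1 else 0) →
        ∃ (τ : List (V × ℕ)) (M : ℕ),
          (∀ p ∈ τ, p.1 ∈ insert z s) ∧
          (∀ n ≤ τ.length, ProperOn G L (insert z s) (applySteps γ (τ.take n))) ∧
          (∀ u ∈ s, applySteps γ τ u = applySteps γ (q :: ρ') u) ∧
          (∀ u, u ≠ z → recolors τ u = recolors (q :: ρ') u) ∧
          recolors τ z ≤ M ∧
          3 * M + k ≤ (q :: ρ').countP (fun p => decide (p.1 ∈ N)) + 2 := by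
      intro k' hk' hsafe hqz hkk'
      have hγ'z : Function.update γ q.1 q.2 z = γ z := Function.update_of_ne (Ne.symm hq1z) _ _
      have h0' : ProperOn G L (insert z s) (Function.update γ q.1 q.2) := by
        apply properOn_insert G L hPs'
        · rw [hγ'z]; exact h0.1 z (Set.mem_insert _ _)
        · intro u hu hadj
          rw [hγ'z]
          rcases eq_or_ne u q.1 with rfl | hne
          · rw [Function.update_self]
            exact fun e => (hqz ((hN q.1).mpr ⟨hadj, hu⟩)) e.symm
          · rw [Function.update_of_ne hne]
            exact h0.2 z (Set.mem_insert _ _) u (Set.mem_insert_of_mem _ hu) hadj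
      obtain ⟨τ', M, c1, c2, c3, c5, cM, cq⟩ := IH (Function.update γ q.1 q.2) k' hk' h0'
        (fun p hp => h2 p (List.mem_cons_of_mem _ hp))
        (fun n hn => by
          have := h3 (n+1) (by simpa using Nat.succ_le_succ hn)
          simpa [applySteps] using this)
        (by rw [hγ'z]; exact hsafe)
      refine ⟨q :: τ', M, ?_, ?_, ?_, ?_, ?_, ?_⟩
      · intro p hp
        rcases List.mem_cons.mp hp with rfl | hp'
        · exact Set.mem_insert_of_mem _ hq1s
        · exact c1 p hp'
      · intro n hn
        match n, hn with
        | 0, _ => simpa [applySteps] using h0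
        | (n+1), hn =>
          have hn' : n ≤ τ'.length := by simpa using hn
          simpa [applySteps] using c2 n hn'
      · intro u hu
        simpa [applySteps] using c3 u hu
      · intro u hu
        rw [recolors_cons, recolors_cons, c5 u hu]
      · simpa [recolors_cons, hq1z] using cM
      · rw [hcount]
        by_cases h : q.1 ∈ N <;> simp [h] at hkk' ⊢ <;> omega
    by_cases hqN : q.1 ∈ N
    · rcases Nat.eq_zero_or_pos k with hk0 | hkpos
      · by_cases hq2 : q.2 = γ z
        · -- HIT: insert a move of z before q
          subst hk0
          set T : Finset ℕ :=
            (((ρ'.filter (fun p => decide (p.1 ∈ N))).take 2).map Prod.snd).toFinset with hT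
          have hTcard : T.card ≤ 2 := by
            refine le_trans (List.toFinset_card_le _) ?_
            rw [List.length_map, List.length_take]
            omega
          set F : Finset ℕ := N.image γ ∪ insert q.2 T with hF
          have hFcard : F.card ≤ 6 := by
            refine le_trans (Finset.card_union_le _ _) ?_
            have h1 := Finset.card_image_le (s := N) (f := γ)
            have h2 := Finset.card_insert_le q.2 T
            omega
          obtain ⟨c, hcL, hcF⟩ := exists_free_color (L z) hLz F hFcard
          have hcIm : ∀ u ∈ N, c ≠ γ u := by
            intro u hu e
            exact hcF (Finset.mem_union.mpr (Or.inl (by rw [e]; exact Finset.mem_image_of_mem γ hu)))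
          have hcq2 : c ≠ q.2 := by
            intro e
            exact hcF (Finset.mem_union.mpr (Or.inr (by rw [e]; exact Finset.mem_insert_self _ _)))
          have hcT : ∀ p ∈ (ρ'.filter (fun p => decide (p.1 ∈ N))).take 2, c ≠ p.2 := by
            intro p hp e
            refine hcF (Finset.mem_union.mpr (Or.inr (Finset.mem_insert_of_mem ?_)))
            rw [hT, List.mem_toFinset, e]
            exact List.mem_map_of_mem (f := Prod.snd) hp
          set γ₁ := Function.update γ z c with hγ₁
          set γ₂ := Function.update γ₁ q.1 q.2 with hγ₂
          have hγ₂z : γ₂ z = c := by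
            rw [hγ₂, Function.update_of_ne (Ne.symm hq1z), hγ₁, Function.update_self]
          have hγ₂s : ∀ u, u ≠ z → γ₂ u = Function.update γ q.1 q.2 u := by
            intro u hu
            rcases eq_or_ne u q.1 with rfl | h
            · rw [hγ₂]; simp
            · rw [hγ₂, Function.update_of_ne h, Function.update_of_ne h, hγ₁,
                Function.update_of_ne hu]
          have h0₁ : ProperOn G L (insert z s) γ₁ := by
            apply properOn_update G L h0 hcL
            intro u hu hadj
            rcases Set.mem_insert_iff.mp hu with rfl | hu'
            · exact absurd hadj (G.irrefl)
            · exact hcIm u ((hN u).mpr ⟨hadj, hu'⟩)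
          have hPs₂ : ProperOn G L s γ₂ := by
            refine properOn_congr G L ?_ hPs'
            intro u hu
            exact (hγ₂s u (fun e => hz (e ▸ hu))).symm
          have h0₂ : ProperOn G L (insert z s) γ₂ := by
            apply properOn_insert G L hPs₂
            · rw [hγ₂z]; exact hcL
            · intro u hu hadj
              rw [hγ₂z, hγ₂s u (fun e => hz (e ▸ hu))]
              rcases eq_or_ne u q.1 with rfl | h
              · rw [Function.update_self]; exact hcq2
              · rw [Function.update_of_ne h]
                exact hcIm u ((hN u).mpr ⟨hadj, hu⟩)
          obtain ⟨τ', M', c1, c2, c3, c5, cM, cq⟩ := IH γ₂ 2 le_rfl h0₂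
            (fun p hp => h2 p (List.mem_cons_of_mem _ hp))
            (fun n hn => by
              have h := h3 (n+1) (by simpa using Nat.succ_le_succ hn)
              have h' : ProperOn G L s (applySteps (Function.update γ q.1 q.2) (ρ'.take n)) := by
                simpa [applySteps] using h
              exact properOn_congr G L
                (fun u hu => applySteps_congrPt _ u ((hγ₂s u (fun e => hz (e ▸ hu))).symm)) h')
            (by
              rw [hγ₂z]
              exact fun p hp e => hcT p hp e.symm)
          refine ⟨(z, c) :: q :: τ', M' + 1, ?_, ?_, ?_, ?_, ?_, ?_⟩
          · intro p hp
            rcases List.mem_cons.mp hp with rfl | hp'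
            · exact Set.mem_insert _ _
            · rcases List.mem_cons.mp hp' with rfl | hp''
              · exact Set.mem_insert_of_mem _ hq1s
              · exact c1 p hp''
          · intro n hn
            match n, hn with
            | 0, _ => simpa [applySteps] using h0
            | 1, _ => simpa [applySteps] using h0₁
            | (n+2), hn =>
              have hn' : n ≤ τ'.length := by simpa using hn
              simpa [applySteps] using c2 n hn'
          · intro u hu
            have huz : u ≠ z := fun e => hz (e ▸ hu)
            have e1 : applySteps γ ((z, c) :: q :: τ') u = applySteps γ₂ τ' u := rfl
            have e2 : applySteps γ (q :: ρ') u = applySteps (Function.update γ q.1 q.2) ρ' u := rfl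
            rw [e1, e2, c3 u hu]
            exact applySteps_congrPt _ u (hγ₂s u huz)
          · intro u hu
            rw [recolors_cons, recolors_cons, recolors_cons, c5 u hu,
              if_neg (fun e : z = u => hu e.symm)]
            omega
          · have : recolors ((z, c) :: q :: τ') z = recolors τ' z + 1 := by
              rw [recolors_cons, recolors_cons, if_neg hq1z, if_pos rfl]
            omega
          · rw [hcount, if_pos hqN]
            omega
        · exact NOMOVE 0 (by omega) (by simp) (fun _ => hq2) (by simp [hqN]; omega)
      · -- k ≥ 1, demand consumed
        obtain ⟨k'', rfl⟩ : ∃ k'', k = k'' + 1 := ⟨k - 1, by omega⟩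
        have hfil : (q :: ρ').filter (fun p => decide (p.1 ∈ N)) =
            q :: ρ'.filter (fun p => decide (p.1 ∈ N)) :=
          List.filter_cons_of_pos (by simpa using hqN)
        have htake : ((q :: ρ').filter (fun p => decide (p.1 ∈ N))).take (k'' + 1) =
            q :: (ρ'.filter (fun p => decide (p.1 ∈ N))).take k'' := by
          rw [hfil, List.take_succ_cons]
        have hq2z : q.2 ≠ γ z := h4 q (by rw [htake]; exact List.mem_cons_self)
        refine NOMOVE k'' (by omega) ?_ (fun _ => hq2z) (by simp [hqN])
        intro p hp
        exact h4 p (by rw [htake]; exact List.mem_cons_of_mem _ hp)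
    · exact NOMOVE k hk (by
        have hfil : (q :: ρ').filter (fun p => decide (p.1 ∈ N)) =
            ρ'.filter (fun p => decide (p.1 ∈ N)) :=
          List.filter_cons_of_neg (by simpa using hqN)
        rw [← hfil]; exact h4) (fun h => absurd h hqN) (by simp [hqN])

theorem insert_pass (G : SimpleGraph V) (L : V → Finset ℕ) (z : V) (s : Set V)
    (hz : z ∉ s) (N : Finset V) (hN : ∀ u, u ∈ N ↔ G.Adj z u ∧ u ∈ s)
    (hNcard : N.card ≤ 3) (hLz : 7 ≤ (L z).card)
    (tz : ℕ) (htz : tz ∈ L z)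
    (ρ : List (V × ℕ)) (γ : V → ℕ)
    (h0 : ProperOn G L (insert z s) γ)
    (h2 : ∀ q ∈ ρ, q.1 ∈ s)
    (h3 : ∀ n ≤ ρ.length, ProperOn G L s (applySteps γ (ρ.take n)))
    (htz2 : ∀ u ∈ N, tz ≠ applySteps γ ρ u) :
    ∃ (τ : List (V × ℕ)) (M : ℕ),
      (∀ q ∈ τ, q.1 ∈ insert z s) ∧
      (∀ n ≤ τ.length, ProperOn G L (insert z s) (applySteps γ (τ.take n))) ∧
      (∀ u ∈ s, applySteps γ τ u = applySteps γ ρ u) ∧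
      (∀ u, u ≠ z → recolors τ u = recolors ρ u) ∧
      applySteps γ τ z = tz ∧
      recolors τ z ≤ M + 1 ∧
      3 * M ≤ ρ.countP (fun q => decide (q.1 ∈ N)) + 2 := by
  obtain ⟨τ, M, c1, c2, c3, c5, cM, cq⟩ :=
    insert_main G L z s hz N hN hNcard hLz ρ γ 0 (by omega) h0 h2 h3 (by simp)
  by_cases hfix : applySteps γ τ z = tz
  · exact ⟨τ, M, c1, c2, c3, c5, hfix, le_trans cM (Nat.le_succ M), by simpa using cq⟩
  · have hend : ProperOn G L (insert z s) (applySteps γ τ) := by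
      have := c2 τ.length (le_refl _)
      simpa [List.take_length] using this
    have hprop : ProperOn G L (insert z s) (Function.update (applySteps γ τ) z tz) := by
      apply properOn_update G L hend htz
      intro u hu hadj
      rcases Set.mem_insert_iff.mp hu with rfl | hu'
      · exact absurd hadj (G.irrefl)
      · rw [c3 u hu']; exact htz2 u ((hN u).mpr ⟨hadj, hu'⟩)
    refine ⟨τ ++ [(z, tz)], M, ?_, ?_, ?_, ?_, ?_, ?_, by simpa using cq⟩
    · intro p hp
      rcases List.mem_append.mp hp with h | h
      · exact c1 p h
      · have : p = (z, tz) := by simpa using h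
        rw [this]; exact Set.mem_insert _ _
    · intro n hn
      rcases le_or_gt n τ.length with hn' | hn'
      · rw [List.take_append_of_le_length hn']; exact c2 n hn'
      · have hlen : (τ ++ [(z, tz)]).length ≤ n := by
          simp only [List.length_append, List.length_singleton]
          have := by simpa using hn
          omega
        rw [List.take_of_length_le hlen, applySteps_append]
        simpa [applySteps] using hprop
    · intro u hu
      have huz : u ≠ z := fun e => hz (e ▸ hu)
      rw [applySteps_append]
      have : applySteps (applySteps γ τ) [(z, tz)] u =
          Function.update (applySteps γ τ) z tz u := rfl
      rw [this, Function.update_of_ne huz]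
      exact c3 u hu
    · intro u hu
      rw [recolors_append]
      have : recolors [(z, tz)] u = 0 := by
        have hzu : ¬ z = u := fun e => hu e.symm
        simp [recolors, List.countP_cons, hzu]
      rw [this, c5 u hu]
      omega
    · rw [applySteps_append]
      have : applySteps (applySteps γ τ) [(z, tz)] z =
          Function.update (applySteps γ τ) z tz z := rfl
      rw [this, Function.update_self]
    · rw [recolors_append]
      have : recolors [(z, tz)] z = 1 := by simp [recolors]
      omega

theorem demand_le (N : Finset V) (σ : List (V × ℕ)) (b : ℕ)
    (hb : ∀ u ∈ N, recolors σ u ≤ b) :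
    σ.countP (fun q => decide (q.1 ∈ N)) ≤ N.card * b := by
  rw [countP_mem_eq_sum]
  calc ∑ u ∈ N, recolors σ u ≤ ∑ _u ∈ N, b := Finset.sum_le_sum hb
  _ = N.card * b := by rw [Finset.sum_const, smul_eq_mul]

theorem demand_le' (N : Finset V) (σ : List (V × ℕ)) (x : V) (hx : x ∈ N) (hcard : N.card ≤ 3)
    (hxb : recolors σ x ≤ 21) (hb : ∀ u ∈ N, u ≠ x → recolors σ u ≤ 30) :
    σ.countP (fun q => decide (q.1 ∈ N)) ≤ 81 := by
  rw [countP_mem_eq_sum]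
  have h1 : ∑ u ∈ N.erase x, recolors σ u ≤ (N.erase x).card * 30 := by
    calc ∑ u ∈ N.erase x, recolors σ u ≤ ∑ _u ∈ N.erase x, 30 :=
      Finset.sum_le_sum (fun u hu => hb u (Finset.mem_of_mem_erase hu) (Finset.ne_of_mem_erase hu))
    _ = _ := by rw [Finset.sum_const, smul_eq_mul]
  have h2 : (N.erase x).card = N.card - 1 := Finset.card_erase_of_mem hx
  have h3 := Finset.sum_erase_add N (recolors σ) hx
  have h4 : (N.erase x).card * 30 ≤ 2 * 30 := Nat.mul_le_mul_right 30 (by omega)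
  omega

/-- Fix a triangle-free graph `G`, a 7-assignment `L`, and `L`-colorings `α`, `β`.
Suppose `G` has a 5-vertex `v` with three 3-neighbors `w₁, w₂, w₃`, and let
`G'' := G − {v, w₁, w₂, w₃}`.  If `G''` has a 30-good `L`-recoloring sequence
transforming `α↾G''` into `β↾G''`, then `G` has a 30-good `L`-recoloring sequence
transforming `α` into `β`. -/
theorem reducible_deg5_with_three_deg3_nbrs (G : SimpleGraph V) [DecidableRel G.Adj]
    (htf : G.CliqueFree 3)
    (L : V → Finset ℕ) (hL : ∀ v, (L v).card = 7)
    (α β : V → ℕ)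
    (hα : ProperOn G L Set.univ α) (hβ : ProperOn G L Set.univ β)
    (v w₁ w₂ w₃ : V) (hdv : G.degree v = 5)
    (ha1 : G.Adj v w₁) (ha2 : G.Adj v w₂) (ha3 : G.Adj v w₃)
    (hnd : ([w₁, w₂, w₃] : List V).Nodup)
    (hd1 : G.degree w₁ = 3) (hd2 : G.degree w₂ = 3) (hd3 : G.degree w₃ = 3)
    (hind : ∃ σ' : List (V × ℕ),
      RecolSeqOn G L {u | u ≠ v ∧ u ≠ w₁ ∧ u ≠ w₂ ∧ u ≠ w₃} α σ' ∧
      (∀ u, u ≠ v → u ≠ w₁ → u ≠ w₂ → u ≠ w₃ → applySteps α σ' u = β u) ∧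
      ∀ u, recolors σ' u ≤ 30) :
    ∃ σ : List (V × ℕ),
      RecolSeqOn G L Set.univ α σ ∧
      applySteps α σ = β ∧
      ∀ u, recolors σ u ≤ 30 := by
  obtain ⟨σ', ⟨hσmem, hσprop⟩, hσfin, hσcnt⟩ := hind
  have hvw1 : v ≠ w₁ := ha1.ne
  have hvw2 : v ≠ w₂ := ha2.ne
  have hvw3 : v ≠ w₃ := ha3.ne
  have hw : w₁ ≠ w₂ ∧ w₁ ≠ w₃ ∧ w₂ ≠ w₃ := by
    simp only [List.nodup_cons, List.mem_cons, List.mem_singleton, List.not_mem_nil,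
      List.nodup_nil, or_false, not_or, and_true] at hnd
    tauto
  set s₀ : Set V := {u | u ≠ v ∧ u ≠ w₁ ∧ u ≠ w₂ ∧ u ≠ w₃} with hs₀def
  have hvs₀ : v ∉ s₀ := fun h => h.1 rfl
  -- pass 1 : vertex v
  set Nv : Finset V := (G.neighborFinset v).filter (fun u => u ≠ w₁ ∧ u ≠ w₂ ∧ u ≠ w₃)
    with hNvdef
  have hNv : ∀ u, u ∈ Nv ↔ G.Adj v u ∧ u ∈ s₀ := by
    intro u
    simp only [hNvdef, Finset.mem_filter, SimpleGraph.mem_neighborFinset, hs₀def,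
      Set.mem_setOf_eq]
    constructor
    · rintro ⟨hadj, h1, h2, h3⟩; exact ⟨hadj, hadj.ne', h1, h2, h3⟩
    · rintro ⟨hadj, _, h1, h2, h3⟩; exact ⟨hadj, h1, h2, h3⟩
  have hNvcard : Nv.card ≤ 2 := by
    have hdisj : Disjoint Nv ({w₁, w₂, w₃} : Finset V) := by
      rw [Finset.disjoint_left]
      intro a ha hT
      obtain ⟨_, hs⟩ := (hNv a).mp ha
      simp only [Finset.mem_insert, Finset.mem_singleton] at hT
      rcases hT with rfl | rfl | rfl
      · exact hs.2.1 rfl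
      · exact hs.2.2.1 rfl
      · exact hs.2.2.2 rfl
    have hsubU : Nv ∪ {w₁, w₂, w₃} ⊆ G.neighborFinset v := by
      intro a ha
      rcases Finset.mem_union.mp ha with h | h
      · rw [SimpleGraph.mem_neighborFinset]; exact ((hNv a).mp h).1
      · simp only [Finset.mem_insert, Finset.mem_singleton] at h
        rcases h with rfl | rfl | rfl <;> simp [SimpleGraph.mem_neighborFinset, ha1, ha2, ha3]
    have h3c : ({w₁, w₂, w₃} : Finset V).card = 3 := by
      rw [Finset.card_insert_of_notMem (by simp [hw.1, hw.2.1]),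
        Finset.card_insert_of_notMem (by simp [hw.2.2]), Finset.card_singleton]
    have hcu := Finset.card_union_of_disjoint hdisj
    have hle := Finset.card_le_card hsubU
    have hdeg : (G.neighborFinset v).card = 5 := by
      rw [SimpleGraph.card_neighborFinset_eq_degree, hdv]
    omega
  obtain ⟨σ₁, M₁, p1mem, p1prop, p1val, p1cnt, p1fin, p1M, p1q⟩ :=
    insert_pass G L v s₀ hvs₀ Nv hNv (by omega) (by rw [hL v]) (β v) (hβ.1 v (Set.mem_univ v))
      σ' α (properOn_mono G L (Set.subset_univ _) hα) hσmem hσprop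
      (by
        intro u hu
        obtain ⟨hadj, hus⟩ := (hNv u).mp hu
        rw [hσfin u hus.1 hus.2.1 hus.2.2.1 hus.2.2.2]
        exact hβ.2 v (Set.mem_univ _) u (Set.mem_univ _) hadj)
  have hDv : σ'.countP (fun q => decide (q.1 ∈ Nv)) ≤ 60 := by
    have h1 := demand_le Nv σ' 30 (fun u _ => hσcnt u)
    have h2 : Nv.card * 30 ≤ 2 * 30 := Nat.mul_le_mul_right 30 hNvcard
    omega
  have hM₁ : recolors σ₁ v ≤ 21 := by omega
  have hcnt₁ : ∀ u, u ≠ v → recolors σ₁ u ≤ 30 := fun u hu => by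
    rw [p1cnt u hu]; exact hσcnt u
  have hfin₁ : ∀ u ∈ insert v s₀, applySteps α σ₁ u = β u := by
    intro u hu
    rcases Set.mem_insert_iff.mp hu with rfl | hu'
    · exact p1fin
    · rw [p1val u hu']; exact hσfin u hu'.1 hu'.2.1 hu'.2.2.1 hu'.2.2.2
  -- pass 2 : vertex w₁
  have hw1S : w₁ ∉ insert v s₀ := by
    intro h
    rcases Set.mem_insert_iff.mp h with e | h'
    · exact hvw1 e.symm
    · exact h'.2.1 rfl
  set N₁ : Finset V := (G.neighborFinset w₁).filter (fun u => u ≠ w₂ ∧ u ≠ w₃) with hN₁def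
  have hN₁ : ∀ u, u ∈ N₁ ↔ G.Adj w₁ u ∧ u ∈ insert v s₀ := by
    intro u
    simp only [hN₁def, Finset.mem_filter, SimpleGraph.mem_neighborFinset, Set.mem_insert_iff,
      hs₀def, Set.mem_setOf_eq]
    constructor
    · rintro ⟨hadj, h2, h3⟩
      refine ⟨hadj, ?_⟩
      by_cases hv : u = v
      · exact Or.inl hv
      · exact Or.inr ⟨hv, hadj.ne', h2, h3⟩
    · rintro ⟨hadj, rfl | h⟩
      · exact ⟨hadj, hvw2, hvw3⟩
      · exact ⟨hadj, h.2.2.1, h.2.2.2⟩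
  have hN₁card : N₁.card ≤ 3 := by
    have hdeg : (G.neighborFinset w₁).card = 3 := by
      rw [SimpleGraph.card_neighborFinset_eq_degree, hd1]
    rw [hN₁def]
    exact le_trans (Finset.card_filter_le _ _) (le_of_eq hdeg)
  obtain ⟨σ₂, M₂, p2mem, p2prop, p2val, p2cnt, p2fin, p2M, p2q⟩ :=
    insert_pass G L w₁ (insert v s₀) hw1S N₁ hN₁ hN₁card (by rw [hL w₁]) (β w₁)
      (hβ.1 w₁ (Set.mem_univ _))
      σ₁ α (properOn_mono G L (Set.subset_univ _) hα) p1mem p1prop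
      (by
        intro u hu
        obtain ⟨hadj, hus⟩ := (hN₁ u).mp hu
        rw [hfin₁ u hus]
        exact hβ.2 w₁ (Set.mem_univ _) u (Set.mem_univ _) hadj)
  have hvN₁ : v ∈ N₁ := (hN₁ v).mpr ⟨ha1.symm, Set.mem_insert _ _⟩
  have hD₁ : σ₁.countP (fun q => decide (q.1 ∈ N₁)) ≤ 81 :=
    demand_le' N₁ σ₁ v hvN₁ hN₁card hM₁ (fun u _ hu => hcnt₁ u hu)
  have hM₂ : recolors σ₂ w₁ ≤ 28 := by omega
  have hcnt₂v : recolors σ₂ v ≤ 21 := by rw [p2cnt v hvw1]; exact hM₁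
  have hcnt₂ : ∀ u, u ≠ v → u ≠ w₁ → recolors σ₂ u ≤ 30 := by
    intro u h1 h2; rw [p2cnt u h2]; exact hcnt₁ u h1
  have hfin₂ : ∀ u ∈ insert w₁ (insert v s₀), applySteps α σ₂ u = β u := by
    intro u hu
    rcases Set.mem_insert_iff.mp hu with rfl | hu'
    · exact p2fin
    · rw [p2val u hu']; exact hfin₁ u hu'
  -- pass 3 : vertex w₂
  have hw2S : w₂ ∉ insert w₁ (insert v s₀) := by
    intro h
    rcases Set.mem_insert_iff.mp h with e | h'
    · exact hw.1 e.symm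
    rcases Set.mem_insert_iff.mp h' with e | h''
    · exact hvw2 e.symm
    · exact h''.2.2.1 rfl
  set N₂ : Finset V := (G.neighborFinset w₂).filter (fun u => u ≠ w₃) with hN₂def
  have hN₂ : ∀ u, u ∈ N₂ ↔ G.Adj w₂ u ∧ u ∈ insert w₁ (insert v s₀) := by
    intro u
    simp only [hN₂def, Finset.mem_filter, SimpleGraph.mem_neighborFinset, Set.mem_insert_iff,
      hs₀def, Set.mem_setOf_eq]
    constructor
    · rintro ⟨hadj, h3⟩
      refine ⟨hadj, ?_⟩
      by_cases hu1 : u = w₁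
      · exact Or.inl hu1
      by_cases hv : u = v
      · exact Or.inr (Or.inl hv)
      · exact Or.inr (Or.inr ⟨hv, hu1, hadj.ne', h3⟩)
    · rintro ⟨hadj, rfl | rfl | h⟩
      · exact ⟨hadj, hw.2.1⟩
      · exact ⟨hadj, hvw3⟩
      · exact ⟨hadj, h.2.2.2⟩
  have hN₂card : N₂.card ≤ 3 := by
    have hdeg : (G.neighborFinset w₂).card = 3 := by
      rw [SimpleGraph.card_neighborFinset_eq_degree, hd2]
    rw [hN₂def]
    exact le_trans (Finset.card_filter_le _ _) (le_of_eq hdeg)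
  obtain ⟨σ₃, M₃, p3mem, p3prop, p3val, p3cnt, p3fin, p3M, p3q⟩ :=
    insert_pass G L w₂ (insert w₁ (insert v s₀)) hw2S N₂ hN₂ hN₂card (by rw [hL w₂]) (β w₂)
      (hβ.1 w₂ (Set.mem_univ _))
      σ₂ α (properOn_mono G L (Set.subset_univ _) hα) p2mem p2prop
      (by
        intro u hu
        obtain ⟨hadj, hus⟩ := (hN₂ u).mp hu
        rw [hfin₂ u hus]
        exact hβ.2 w₂ (Set.mem_univ _) u (Set.mem_univ _) hadj)
  have hvN₂ : v ∈ N₂ := (hN₂ v).mpr ⟨ha2.symm, Set.mem_insert_of_mem _ (Set.mem_insert _ _)⟩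
  have hD₂ : σ₂.countP (fun q => decide (q.1 ∈ N₂)) ≤ 81 := by
    refine demand_le' N₂ σ₂ v hvN₂ hN₂card hcnt₂v ?_
    intro u _ hu
    by_cases hu1 : u = w₁
    · rw [hu1]; exact le_trans hM₂ (by norm_num)
    · exact hcnt₂ u hu hu1
  have hM₃ : recolors σ₃ w₂ ≤ 28 := by omega
  have hcnt₃v : recolors σ₃ v ≤ 21 := by rw [p3cnt v hvw2]; exact hcnt₂v
  have hcnt₃w₁ : recolors σ₃ w₁ ≤ 28 := by rw [p3cnt w₁ hw.1]; exact hM₂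
  have hcnt₃ : ∀ u, u ≠ v → u ≠ w₁ → u ≠ w₂ → recolors σ₃ u ≤ 30 := by
    intro u h1 h2 h3; rw [p3cnt u h3]; exact hcnt₂ u h1 h2
  have hfin₃ : ∀ u ∈ insert w₂ (insert w₁ (insert v s₀)), applySteps α σ₃ u = β u := by
    intro u hu
    rcases Set.mem_insert_iff.mp hu with rfl | hu'
    · exact p3fin
    · rw [p3val u hu']; exact hfin₂ u hu'
  -- pass 4 : vertex w₃
  have hw3S : w₃ ∉ insert w₂ (insert w₁ (insert v s₀)) := by
    intro h
    rcases Set.mem_insert_iff.mp h with e | h'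
    · exact hw.2.2 e.symm
    rcases Set.mem_insert_iff.mp h' with e | h''
    · exact hw.2.1 e.symm
    rcases Set.mem_insert_iff.mp h'' with e | h'''
    · exact hvw3 e.symm
    · exact h'''.2.2.2 rfl
  have hN₃ : ∀ u, u ∈ G.neighborFinset w₃ ↔
      G.Adj w₃ u ∧ u ∈ insert w₂ (insert w₁ (insert v s₀)) := by
    intro u
    simp only [SimpleGraph.mem_neighborFinset, Set.mem_insert_iff, hs₀def, Set.mem_setOf_eq]
    constructor
    · intro hadj
      refine ⟨hadj, ?_⟩
      by_cases hu2 : u = w₂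
      · exact Or.inl hu2
      by_cases hu1 : u = w₁
      · exact Or.inr (Or.inl hu1)
      by_cases hv : u = v
      · exact Or.inr (Or.inr (Or.inl hv))
      · exact Or.inr (Or.inr (Or.inr ⟨hv, hu1, hu2, hadj.ne'⟩))
    · exact fun h => h.1
  have hN₃card : (G.neighborFinset w₃).card ≤ 3 := by
    rw [SimpleGraph.card_neighborFinset_eq_degree, hd3]
  obtain ⟨σ₄, M₄, p4mem, p4prop, p4val, p4cnt, p4fin, p4M, p4q⟩ :=
    insert_pass G L w₃ (insert w₂ (insert w₁ (insert v s₀))) hw3S (G.neighborFinset w₃) hN₃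
      hN₃card (by rw [hL w₃]) (β w₃) (hβ.1 w₃ (Set.mem_univ _))
      σ₃ α (properOn_mono G L (Set.subset_univ _) hα) p3mem p3prop
      (by
        intro u hu
        obtain ⟨hadj, hus⟩ := (hN₃ u).mp hu
        rw [hfin₃ u hus]
        exact hβ.2 w₃ (Set.mem_univ _) u (Set.mem_univ _) hadj)
  have hvN₃ : v ∈ G.neighborFinset w₃ := (hN₃ v).mpr
    ⟨ha3.symm, Set.mem_insert_of_mem _ (Set.mem_insert_of_mem _ (Set.mem_insert _ _))⟩
  have hD₃ : σ₃.countP (fun q => decide (q.1 ∈ G.neighborFinset w₃)) ≤ 81 := by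
    refine demand_le' (G.neighborFinset w₃) σ₃ v hvN₃ hN₃card hcnt₃v ?_
    intro u _ hu
    by_cases hu1 : u = w₁
    · rw [hu1]; exact le_trans hcnt₃w₁ (by norm_num)
    by_cases hu2 : u = w₂
    · rw [hu2]; exact le_trans hM₃ (by norm_num)
    · exact hcnt₃ u hu hu1 hu2
  have hM₄ : recolors σ₄ w₃ ≤ 28 := by omega
  have hcnt₄v : recolors σ₄ v ≤ 21 := by rw [p4cnt v hvw3]; exact hcnt₃v
  have hcnt₄w₁ : recolors σ₄ w₁ ≤ 28 := by rw [p4cnt w₁ hw.2.1]; exact hcnt₃w₁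
  have hcnt₄w₂ : recolors σ₄ w₂ ≤ 28 := by rw [p4cnt w₂ hw.2.2]; exact hM₃
  have hfin₄ : ∀ u ∈ insert w₃ (insert w₂ (insert w₁ (insert v s₀))), applySteps α σ₄ u = β u := by
    intro u hu
    rcases Set.mem_insert_iff.mp hu with rfl | hu'
    · exact p4fin
    · rw [p4val u hu']; exact hfin₃ u hu'
  have huniv : (insert w₃ (insert w₂ (insert w₁ (insert v s₀))) : Set V) = Set.univ := by
    ext u
    simp only [Set.mem_insert_iff, Set.mem_univ, iff_true, hs₀def, Set.mem_setOf_eq]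
    by_cases h1 : u = w₃
    · exact Or.inl h1
    by_cases h2 : u = w₂
    · exact Or.inr (Or.inl h2)
    by_cases h3 : u = w₁
    · exact Or.inr (Or.inr (Or.inl h3))
    by_cases h4 : u = v
    · exact Or.inr (Or.inr (Or.inr (Or.inl h4)))
    · exact Or.inr (Or.inr (Or.inr (Or.inr ⟨h4, h3, h2, h1⟩)))
  refine ⟨σ₄, ⟨fun q _ => Set.mem_univ _, ?_⟩, ?_, ?_⟩
  · intro n hn
    have := p4prop n hn
    rwa [huniv] at this
  · funext u
    exact hfin₄ u (by rw [huniv]; exact Set.mem_univ u)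
  · intro u
    by_cases h4 : u = w₃
    · rw [h4]; exact le_trans hM₄ (by norm_num)
    rw [p4cnt u h4]
    by_cases h3 : u = w₂
    · rw [h3]; exact le_trans hM₃ (by norm_num)
    rw [p3cnt u h3]
    by_cases h2 : u = w₁
    · rw [h2]; exact le_trans hM₂ (by norm_num)
    rw [p2cnt u h2]
    by_cases h1 : u = v
    · rw [h1]; exact le_trans hM₁ (by norm_num)
    rw [p1cnt u h1]
    exact hσcnt u
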